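/- arXiv:1612.03383 — 8 statements merged into one kernel-verified Lean document; each statement's English description precedes it below -/
import Mathlib

section
/- Let G be a group, 𝔤 = (g₁,…,gₙ) a tuple of elements, ℰ = {E₁,…,Eₘ} a partition of G, and x ∈ G. Then Con(𝔤, ℰ) = Con(𝔤, ℰ·x), where ℰ·x = {E₁x, …, Eₘx} is the right-translated partition. -/
def basePoints {G : Type*} [Group G] {n m : ℕ} (g : Fin n → G) (E : Fin m → Set G)
    (C : Fin (n + 1) → Fin m) : Set G :=
  {x | x ∈ E (C 0) ∧ ∀ j : Fin n, g j * x ∈ E (C j.succ)}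

/-- The set of configurations corresponding to `(g, E)`. -/
def ConSet {G : Type*} [Group G] {n m : ℕ} (g : Fin n → G) (E : Fin m → Set G) :
    Set (Fin (n + 1) → Fin m) :=
  {C | (basePoints g E C).Nonempty}

theorem stmt_3 {G : Type*} [Group G] {n m : ℕ} (g : Fin n → G) (E : Fin m → Set G)
    (hpart : ∀ y : G, ∃! i, y ∈ E i) (x : G) :
    ConSet g E = ConSet g (fun i => (fun y => y * x) '' E i) := by
  ext C
  constructor
  · rintro ⟨x₀, h0, hj⟩
    exact ⟨x₀ * x, ⟨x₀, h0, rfl⟩, fun j => ⟨g j * x₀, hj j, by simp [mul_assoc]⟩⟩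
  · rintro ⟨y, ⟨x₀, h0, rfl⟩, hj⟩
    refine ⟨x₀, h0, fun j => ?_⟩
    obtain ⟨z, hz, hze⟩ := hj j
    have hz' : z = g j * x₀ := by
      have h : z * x = (g j * x₀) * x := by simpa [mul_assoc] using hze
      exact mul_right_cancel h
    exact hz' ▸ hz
end

section
/- Let G be a group, (𝔤, ℰ) a configuration pair with g₀ = e. For each color i ∈ {1,…,m} and each pair j, j' ∈ {0,…,n}, one has g_{j'}⁻¹ g_j · (⋃_{C : Cⱼ = i} x₀(C)) = ⋃_{C : C_{j'} = i} x₀(C), where the unions range over configurations C ∈ Con(𝔤, ℰ) whose j-th (resp. j'-th) coordinate equals i. -/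
/-- The extended tuple `(g₀, g₁, …, gₙ)` with `g₀ = e`. -/
def gext {G : Type*} [Group G] {n : ℕ} (g : Fin n → G) : Fin (n + 1) → G :=
  Fin.cases 1 g

lemma mem_basePoints_iff {G : Type*} [Group G] {n m : ℕ} (g : Fin n → G) (E : Fin m → Set G)
    (C : Fin (n + 1) → Fin m) (x : G) :
    x ∈ basePoints g E C ↔ ∀ k : Fin (n + 1), gext g k * x ∈ E (C k) := by
  constructor
  · intro h k
    induction k using Fin.cases with
    | zero => simpa [gext] using h.1
    | succ j => simpa [gext] using h.2 j
  · intro h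
    exact ⟨by simpa [gext] using h 0, fun j => by simpa [gext] using h j.succ⟩

lemma union_eq {G : Type*} [Group G] {n m : ℕ} (g : Fin n → G) (E : Fin m → Set G)
    (hpart : ∀ x : G, ∃! i, x ∈ E i) (i : Fin m) (j : Fin (n + 1)) :
    (⋃ C ∈ {C ∈ ConSet g E | C j = i}, basePoints g E C) = {x | gext g j * x ∈ E i} := by
  ext x
  simp only [Set.mem_iUnion, Set.mem_setOf_eq, Set.mem_sep_iff, exists_prop]
  constructor
  · rintro ⟨C, ⟨_, hCj⟩, hx⟩
    have := (mem_basePoints_iff g E C x).mp hx j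
    rwa [hCj] at this
  · intro hx
    refine ⟨fun k => (hpart (gext g k * x)).choose, ⟨⟨x, ?_⟩, ?_⟩, ?_⟩
    · exact (mem_basePoints_iff g E _ x).mpr fun k => (hpart (gext g k * x)).choose_spec.1
    · exact ((hpart (gext g j * x)).choose_spec.2 i hx).symm
    · exact (mem_basePoints_iff g E _ x).mpr fun k => (hpart (gext g k * x)).choose_spec.1

theorem stmt_5 {G : Type*} [Group G] {n m : ℕ} (g : Fin n → G) (E : Fin m → Set G)
    (hpart : ∀ x : G, ∃! i, x ∈ E i) (i : Fin m) (j j' : Fin (n + 1)) :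
    (fun x => (gext g j')⁻¹ * gext g j * x) ''
        (⋃ C ∈ {C ∈ ConSet g E | C j = i}, basePoints g E C) =
      ⋃ C ∈ {C ∈ ConSet g E | C j' = i}, basePoints g E C := by
  rw [union_eq g E hpart i j, union_eq g E hpart i j']
  ext y
  simp only [Set.mem_image, Set.mem_setOf_eq]
  constructor
  · rintro ⟨x, hx, rfl⟩
    have : gext g j' * ((gext g j')⁻¹ * gext g j * x) = gext g j * x := by
      group
    rwa [this]
  · intro hy
    refine ⟨(gext g j)⁻¹ * gext g j' * y, ?_, by group⟩
    have : gext g j * ((gext g j)⁻¹ * gext g j' * y) = gext g j' * y := by group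
    rwa [this]
end

section
/- Let A be an m×n real matrix such that the system A·X = 0 has no nonzero nonnegative solution X ∈ ℝⁿ (X ≥ 0 componentwise and X ≠ 0). Then there exists an invertible m×m real matrix P such that B = P·A has all entries nonnegative and no column of B is identically zero. -/
/-!
Separating the origin from the image of the standard simplex under `A` (Gordan's alternative)
gives a row vector `y` with `yA > 0` componentwise. Adding `t • yA` to every row of `A`, i.e. taking
`P = 1 + t • 1yᵀ`, makes every entry positive for large `t`, and `det P = 1 + t ∑ yᵢ` vanishes for
at most one `t`.
-/

open Matrix Filter

theorem eventually_one_add_mul_ne_zero {K : Type*} [Field K] [LinearOrder K] [IsStrictOrderedRing K]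
    (a : K) : ∀ᶠ t in atTop, 1 + t * a ≠ 0 := by
  filter_upwards [eventually_ne_atTop (-a⁻¹)] with t ht h
  have ha : a ≠ 0 := by rintro rfl; simp at h
  exact ht (by field_simp; linarith)

namespace Matrix

variable {ι κ : Type*} [Fintype ι]

theorem det_one_add_vecMulVec {R : Type*} [CommRing R] [DecidableEq ι] (u v : ι → R) :
    det (1 + vecMulVec u v) = 1 + v ⬝ᵥ u := by
  rw [vecMulVec_eq Unit, det_one_add_replicateCol_mul_replicateRow]

theorem exists_forall_vecMul_pos [Fintype κ] (A : Matrix ι κ ℝ)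
    (hA : ∀ x, A *ᵥ x = 0 → 0 ≤ x → x = 0) : ∃ y, ∀ j, 0 < (y ᵥ* A) j := by
  classical
  set K := A.mulVecLin '' stdSimplex ℝ κ
  have hK : IsCompact K :=
    (isCompact_stdSimplex ℝ κ).image A.mulVecLin.continuous_of_finiteDimensional
  have hzero : (0 : ι → ℝ) ∉ K := by
    rintro ⟨x, hx, hx0⟩
    simpa [hA x hx0 hx.1] using hx.2
  obtain ⟨f, u, hf0, hfK⟩ := geometric_hahn_banach_point_closed
    ((convex_stdSimplex ℝ κ).linear_image A.mulVecLin) hK.isClosed hzero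
  let y := LinearEquiv.piRing ℝ ℝ ι ℝ f
  have hf : ∀ v, f v = y ⬝ᵥ v := fun v =>
    calc f v = (LinearEquiv.piRing ℝ ℝ ι ℝ).symm y v := by
          rw [LinearEquiv.symm_apply_apply]; rfl
      _ = y ⬝ᵥ v := by simp [dotProduct, mul_comm]
  refine ⟨y, fun j => ?_⟩
  have hcol : A *ᵥ Pi.single j 1 ∈ K := ⟨_, single_mem_stdSimplex ℝ j, rfl⟩
  have hu := hfK _ hcol
  rw [map_zero] at hf0
  rw [hf, dotProduct_mulVec, dotProduct_single_one] at hu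
  linarith

theorem exists_isUnit_forall_mul_pos [DecidableEq ι] [Finite κ] (A : Matrix ι κ ℝ) {y : ι → ℝ}
    (hy : ∀ j, 0 < (y ᵥ* A) j) : ∃ P : Matrix ι ι ℝ, IsUnit P ∧ ∀ i j, 0 < (P * A) i j := by
  have hpos : ∀ᶠ t in atTop, ∀ i j, 0 < A i j + t * (y ᵥ* A) j := by
    simp only [eventually_all]
    exact fun i j => (tendsto_atTop_add_const_left _ (A i j)
      (tendsto_id.atTop_mul_const (hy j))).eventually_gt_atTop 0
  obtain ⟨t, htpos, htdet⟩ := (hpos.and (eventually_one_add_mul_ne_zero (∑ i, y i))).exists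
  refine ⟨1 + vecMulVec 1 (t • y), ?_, fun i j => ?_⟩
  · rw [isUnit_iff_isUnit_det, det_one_add_vecMulVec, isUnit_iff_ne_zero]
    simpa [dotProduct, Finset.mul_sum] using htdet
  · rw [Matrix.add_mul, vecMulVec_mul, smul_vecMul]
    simpa [vecMulVec_apply] using htpos i j

end Matrix

theorem stmt_6 {m n : ℕ} (A : Matrix (Fin m) (Fin n) ℝ)
    (hA : ∀ X : Fin n → ℝ, A.mulVec X = 0 → (∀ i, 0 ≤ X i) → X = 0) :
    ∃ P : Matrix (Fin m) (Fin m) ℝ, IsUnit P ∧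
      (∀ i j, 0 ≤ (P * A) i j) ∧ (∀ j, ∃ i, (P * A) i j ≠ 0) := by
  obtain ⟨y, hy⟩ := A.exists_forall_vecMul_pos hA
  obtain ⟨P, hP, hPA⟩ := A.exists_isUnit_forall_mul_pos hy
  refine ⟨P, hP, fun i j => (hPA i j).le, fun j => ?_⟩
  obtain ⟨i, -, -⟩ := Finset.exists_ne_zero_of_sum_ne_zero (s := Finset.univ)
    (f := fun i => y i * A i j) (hy j).ne'
  exact ⟨i, (hPA i j).ne'⟩
end

section
/- Let G be a finite group with generating tuple 𝔤 enumerating all elements of G and let ℰ be the partition of G into singletons. If H is a group with a generating tuple 𝔥 and partition ℱ such that Con(𝔥, ℱ) = Con(𝔤, ℰ), and H admits the same family of configuration sets as G (i.e., Con(G) = Con(H)), then H is isomorphic to G. -/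
/-- The family of all configuration sets of `G`, over all ordered generating
tuples and all finite partitions of `G`. -/
def ConFamily (G : Type*) [Group G] : Set ((n : ℕ) × (m : ℕ) × Set (Fin (n + 1) → Fin m)) :=
  {s | ∃ (g : Fin s.1 → G) (E : Fin s.2.1 → Set G),
    Subgroup.closure (Set.range g) = ⊤ ∧ (∀ x : G, ∃! i, x ∈ E i) ∧ s.2.2 = ConSet g E}

theorem stmt_9 {G H : Type*} [Group G] [Group H] [Finite G] {n m : ℕ}
    (g : Fin n → G) (hg : Function.Bijective g)
    (E : Fin m → Set G) (hE : ∀ x : G, ∃! i, x ∈ E i) (hsing : ∀ i, ∃ a : G, E i = {a})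
    (h : Fin n → H) (hh : Subgroup.closure (Set.range h) = ⊤)
    (F : Fin m → Set H) (hF : ∀ y : H, ∃! i, y ∈ F i)
    (heq : ConSet h F = ConSet g E)
    (hfam : ConFamily G = ConFamily H) :
    Nonempty (H ≃* G) := by
  classical
  choose a ha using hsing
  choose ι hι1 hι2 using hE
  choose cl hcl1 hcl2 using hF
  have hι1' : ∀ x : G, x ∈ E (ι x) := hι1
  have hι2' : ∀ (x : G) (i : Fin m), x ∈ E i → i = ι x := hι2
  have hcl1' : ∀ y : H, y ∈ F (cl y) := hcl1
  have hcl2' : ∀ (y : H) (i : Fin m), y ∈ F i → i = cl y := hcl2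
  have haι : ∀ x : G, a (ι x) = x := by
    intro x
    have h1 : x ∈ E (ι x) := hι1' x
    rw [ha] at h1
    exact h1.symm
  set φ : H → G := fun y => a (cl y) with hφ
  -- key intertwining
  have key : ∀ (y : H) (j : Fin n), φ (h j * y) = g j * φ y := by
    intro y j
    set C : Fin (n + 1) → Fin m := Fin.cases (cl y) (fun j => cl (h j * y)) with hC
    have hmem : C ∈ ConSet h F := by
      refine ⟨y, ?_, ?_⟩
      · simpa [hC] using hcl1' y
      · intro j'
        simpa [hC] using hcl1' (h j' * y)
    rw [heq] at hmem
    obtain ⟨x, hx0, hxj⟩ := hmem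
    have hx : x = φ y := by
      have h1 : x ∈ E (C 0) := hx0
      simp only [hC, Fin.cases_zero, ha] at h1
      exact h1
    have h2 := hxj j
    simp only [hC, Fin.cases_succ, ha] at h2
    rw [hx] at h2
    exact h2.symm
  -- φ surjective
  have φsurj : Function.Surjective φ := by
    intro b
    set C : Fin (n + 1) → Fin m := Fin.cases (ι b) (fun j => ι (g j * b)) with hC
    have hmem : C ∈ ConSet g E := by
      refine ⟨b, ?_, ?_⟩
      · simpa [hC] using hι1' b
      · intro j'
        simpa [hC] using hι1' (g j' * b)
    rw [← heq] at hmem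
    obtain ⟨y, hy0, -⟩ := hmem
    refine ⟨y, ?_⟩
    simp only [hC, Fin.cases_zero] at hy0
    have hy : cl y = ι b := (hcl2' y (ι b) hy0).symm
    rw [hφ]
    simp only [hy, haι]
  -- every element acts compatibly
  have hS : ∀ z : H, ∃ c : G, ∀ y, φ (z * y) = c * φ y := by
    intro z
    let S : Subgroup H :=
      { carrier := {z | ∃ c : G, ∀ y, φ (z * y) = c * φ y}
        one_mem' := ⟨1, by intro y; rw [one_mul, one_mul]⟩
        mul_mem' := by
          rintro z₁ z₂ ⟨c₁, hc₁⟩ ⟨c₂, hc₂⟩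
          exact ⟨c₁ * c₂, fun y => by rw [mul_assoc, hc₁, hc₂, mul_assoc]⟩
        inv_mem' := by
          rintro z ⟨c, hc⟩
          refine ⟨c⁻¹, fun y => ?_⟩
          have h1 := hc (z⁻¹ * y)
          rw [← mul_assoc, mul_inv_cancel, one_mul] at h1
          rw [h1, inv_mul_cancel_left] }
    have hle : Subgroup.closure (Set.range h) ≤ S := by
      apply Subgroup.closure_le _ |>.mpr
      rintro _ ⟨j, rfl⟩
      exact ⟨g j, fun y => key y j⟩
    rw [hh] at hle
    exact hle (Subgroup.mem_top z)
  choose c hc using hS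
  have cmul : ∀ z₁ z₂ : H, c (z₁ * z₂) = c z₁ * c z₂ := by
    intro z₁ z₂
    have h1 := hc (z₁ * z₂) 1
    have h2 := hc z₂ 1
    have h3 := hc z₁ (z₂ * 1)
    rw [← mul_assoc] at h3
    apply mul_right_cancel (b := φ ((1 : H)))
    rw [← h1, h3, h2, mul_assoc]
  have hcval : ∀ z : H, c z = φ z * (φ 1)⁻¹ := by
    intro z
    have h1 := hc z 1
    rw [mul_one] at h1
    rw [h1, mul_assoc, mul_inv_cancel, mul_one]
  have csurj : Function.Surjective c := by
    intro x
    obtain ⟨y, hy⟩ := φsurj (x * φ 1)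
    refine ⟨y, ?_⟩
    rw [hcval, hy, mul_assoc, mul_inv_cancel, mul_one]
  -- cardinality bound
  have hcardG : Nat.card G = n := by
    rw [← Nat.card_eq_of_bijective g hg, Nat.card_eq_fintype_card, Fintype.card_fin]
  have noEmb : ∀ y : Fin (n + 1) → H, ¬ Function.Injective y := by
    intro y hy
    set F' : Fin (n + 2) → Set H := fun i =>
      if hi : (i : ℕ) < n + 1 then {y ⟨i, hi⟩} else (Set.range y)ᶜ with hF'def
    have hF' : ∀ w : H, ∃! i, w ∈ F' i := by
      intro w
      by_cases hw : w ∈ Set.range y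
      · obtain ⟨i₀, rfl⟩ := hw
        refine ⟨i₀.castSucc, ?_, ?_⟩
        · simp only [hF'def, Fin.coe_castSucc]
          rw [dif_pos i₀.isLt]
          rfl
        · intro i hi
          simp only [hF'def] at hi
          split_ifs at hi with h1
          · have h2 : y i₀ = y ⟨i, h1⟩ := hi
            have h3 := congrArg Fin.val (hy h2)
            exact Fin.ext (by simpa using h3.symm)
          · exact absurd ⟨i₀, rfl⟩ hi
      · refine ⟨⟨n + 1, by omega⟩, ?_, ?_⟩
        · simp only [hF'def]
          rw [dif_neg (by simp)]
          exact hw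
        · intro i hi
          simp only [hF'def] at hi
          split_ifs at hi with h1
          · exact absurd ⟨_, hi.symm⟩ hw
          · exact Fin.ext (show (i:ℕ) = n + 1 by have := i.isLt; omega)
    choose cl' hcl'1 hcl'2 using hF'
    have hcl'1' : ∀ w : H, w ∈ F' (cl' w) := hcl'1
    have hne : ∀ i : Fin (n + 1), y i ∈ F' i.castSucc := by
      intro i
      simp only [hF'def, Fin.coe_castSucc]
      rw [dif_pos i.isLt]
      rfl
    have hmem : (⟨n, n + 2, ConSet h F'⟩ : (n : ℕ) × (m : ℕ) × Set (Fin (n + 1) → Fin m)) ∈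
        ConFamily H := ⟨h, F', hh, fun w => ⟨cl' w, hcl'1' w, fun i hi => hcl'2 w i hi⟩, rfl⟩
    rw [← hfam] at hmem
    obtain ⟨g', E', -, hE', hCon⟩ := hmem
    replace hCon : ConSet h F' = ConSet g' E' := hCon
    have hE'ne : ∀ i : Fin (n + 1), (E' i.castSucc).Nonempty := by
      intro i
      set C : Fin (n + 1) → Fin (n + 2) :=
        Fin.cases i.castSucc (fun j => cl' (h j * y i)) with hC
      have hCm : C ∈ ConSet h F' := by
        refine ⟨y i, ?_, ?_⟩
        · simpa [hC] using hne i
        · intro j'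
          simpa [hC] using hcl'1' (h j' * y i)
      rw [hCon] at hCm
      obtain ⟨x, hx0, -⟩ := hCm
      exact ⟨x, by simpa [hC] using hx0⟩
    choose x hx using hE'ne
    have hxinj : Function.Injective x := by
      intro i j hij
      obtain ⟨i', hi'1, hi'2⟩ := hE' (x i)
      have h1 := hi'2 i.castSucc (hx i)
      have h2 := hi'2 j.castSucc (hij ▸ hx j)
      exact Fin.castSucc_injective _ (h1.trans h2.symm)
    have hle := Nat.card_le_card_of_injective x hxinj
    rw [hcardG, Nat.card_eq_fintype_card, Fintype.card_fin] at hle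
    omega
  have hfinH : Finite H := by
    by_contra hinf
    rw [not_finite_iff_infinite] at hinf
    exact noEmb (fun i : Fin (n + 1) => Infinite.natEmbedding H i.val)
      (fun i j hij => Fin.ext ((Infinite.natEmbedding H).injective hij))
  have hcardH : Nat.card H ≤ n := by
    by_contra hlt
    push_neg at hlt
    have e := Finite.equivFin H
    exact noEmb (fun i : Fin (n + 1) => e.symm (Fin.castLE hlt i))
      (e.symm.injective.comp (Fin.castLE_injective hlt))
  have hbij : Function.Bijective c :=
    csurj.bijective_of_nat_card_le (by rw [hcardG]; exact hcardH)
  exact ⟨MulEquiv.ofBijective (MonoidHom.mk' c cmul) hbij⟩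
end

section
/- Let x₁ = [[2,3],[3,4]] and x₂ = [[3,10],[1,3]] in GL₂(ℤ). Then x₁ and x₂ are not conjugate in GL₂(ℤ), and x₁⁻¹ and x₂ are not conjugate in GL₂(ℤ). -/
/-!
Both matrices have characteristic polynomial `X² - 6X - 1`, so no similarity invariant over `ℚ`
separates them. A conjugator `p` with `p x₁ = x₂ p` is determined by its bottom row `(z, w)`,
and then `det p = 3w² - 2zw - 3z²`. This binary form only takes the values `0, ±2` modulo `5`,
so it never equals `±1`, and `p` cannot lie in `GL₂(ℤ)`. For `x₁⁻¹` the trace already differs: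
`tr x₁⁻¹ = -6 ≠ 6 = tr x₂`.
-/

open Matrix

theorem Matrix.mul_eq_mul_of_conj_eq {n R : Type*} [Fintype n] [DecidableEq n] [CommRing R]
    {p A B : Matrix n n R} (hp : IsUnit p) (h : p * A * p⁻¹ = B) : p * A = B * p := by
  rw [← h, nonsing_inv_mul_cancel_right p (p * A) ((isUnit_iff_isUnit_det p).mp hp)]

theorem det_eq_form_of_mul_eq_mul {p : Matrix (Fin 2) (Fin 2) ℤ}
    (h : p * !![2, 3; 3, 4] = !![3, 10; 1, 3] * p) :
    p.det = 3 * p 1 1 ^ 2 - 2 * p 1 0 * p 1 1 - 3 * p 1 0 ^ 2 := by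
  have e00 := congrFun (congrFun h 0) 0
  have e01 := congrFun (congrFun h 0) 1
  simp only [mul_apply, Fin.sum_univ_two, of_apply, cons_val', cons_val_zero, cons_val_one,
    cons_val_fin_one, empty_val'] at e00 e01
  have hx : p 0 0 = 3 * p 1 1 - p 1 0 := by omega
  have hy : p 0 1 = 3 * p 1 0 + p 1 1 := by omega
  rw [det_fin_two, hx, hy]
  ring

theorem sq_form_ne_one_zmod_five :
    ∀ z w : ZMod 5, (3 * w ^ 2 - 2 * z * w - 3 * z ^ 2) ^ 2 ≠ 1 := by
  decide

theorem not_isUnit_form (z w : ℤ) : ¬ IsUnit (3 * w ^ 2 - 2 * z * w - 3 * z ^ 2) := by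
  intro hu
  have hsq := congrArg (Int.cast : ℤ → ZMod 5) (Int.isUnit_mul_self hu)
  push_cast at hsq
  exact sq_form_ne_one_zmod_five z w (by rw [sq, hsq])

theorem inv_two_three_three_four :
    (!![2, 3; 3, 4] : Matrix (Fin 2) (Fin 2) ℤ)⁻¹ = !![-4, 3; 3, -2] :=
  inv_eq_left_inv (by simp [one_fin_two])

theorem stmt_10 :
    (¬ ∃ p : Matrix (Fin 2) (Fin 2) ℤ, IsUnit p ∧
        p * (!![2, 3; 3, 4] : Matrix (Fin 2) (Fin 2) ℤ) * p⁻¹ = !![3, 10; 1, 3]) ∧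
    (¬ ∃ p : Matrix (Fin 2) (Fin 2) ℤ, IsUnit p ∧
        p * (!![2, 3; 3, 4] : Matrix (Fin 2) (Fin 2) ℤ)⁻¹ * p⁻¹ = !![3, 10; 1, 3]) := by
  constructor
  · rintro ⟨p, hp, h⟩
    have hdet := (isUnit_iff_isUnit_det p).mp hp
    rw [det_eq_form_of_mul_eq_mul (mul_eq_mul_of_conj_eq hp h)] at hdet
    exact not_isUnit_form _ _ hdet
  · rintro ⟨p, hp, h⟩
    have htr := congrArg trace h
    rw [trace_conj hp, inv_two_three_three_four] at htr
    simp [trace_fin_two] at htr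
end

section
/- Let G be a finitely generated group in which every element has finitely many conjugates (an FC-group). Then the quotient G/Z(G) of G by its center is finite if and only if G is an FC-group; in particular, for finitely generated G, G is an FC-group iff G/Z(G) is finite. -/
/-! The conjugacy class of `g` is in bijection with the cosets of its centralizer, so `G` is an
FC-group iff every `centralizer {g}` has finite index. One direction follows since `Z(G)` lies in
every centralizer; for the other, `Z(G)` is the intersection of the centralizers of finitely
many generators. -/

namespace Subgroup

variable {G : Type*} [Group G]

theorem index_centralizer_singleton (g : G) :
    (centralizer {g}).index = {h : G | IsConj g h}.ncard := by
  have hclass : MulAction.orbit (ConjAct G) g = {h : G | IsConj g h} := by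
    ext h
    rw [Set.mem_ofPred_eq, ConjAct.mem_orbit_conjAct, isConj_comm]
  rw [centralizer_eq_comap_stabilizer, ← hclass, ← MulAction.index_stabilizer]
  exact index_comap_of_surjective _ ConjAct.toConjAct.surjective

theorem finiteIndex_centralizer_singleton_iff (g : G) :
    (centralizer {g}).FiniteIndex ↔ {h : G | IsConj g h}.Finite := by
  rw [finiteIndex_iff, index_centralizer_singleton]
  refine ⟨Set.finite_of_ncard_ne_zero, fun hfin => ?_⟩
  exact ((Set.ncard_pos hfin).2 ⟨g, IsConj.refl g⟩).ne'

theorem finite_setOf_isConj_of_finiteIndex_center [(center G).FiniteIndex] (g : G) :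
    {h : G | IsConj g h}.Finite :=
  (finiteIndex_centralizer_singleton_iff g).1 (finiteIndex_of_le (center_le_centralizer _))

theorem finiteIndex_center_of_finite_setOf_isConj [Group.FG G]
    (hFC : ∀ g : G, {h : G | IsConj g h}.Finite) : (center G).FiniteIndex := by
  obtain ⟨S, hS⟩ := Group.FG.out (G := G)
  rw [center_eq_infi' hS]
  exact finiteIndex_iInf fun s => (finiteIndex_centralizer_singleton_iff _).2 (hFC s)

end Subgroup

theorem stmt_11 {G : Type*} [Group G] (hfg : Group.FG G) :
    (∀ g : G, {h : G | IsConj g h}.Finite) ↔ Finite (G ⧸ Subgroup.center G) := by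
  rw [← Subgroup.finiteIndex_iff_finite_quotient]
  exact ⟨Subgroup.finiteIndex_center_of_finite_setOf_isConj,
    fun _ => Subgroup.finite_setOf_isConj_of_finiteIndex_center⟩
end

section
/- Let S be a discrete left amenable semigroup, i.e., there exists a mean M on ℓ^∞(S) (a positive linear functional with M(1) = 1) satisfying M(ₓf) = M(f) for all x ∈ S and f ∈ ℓ^∞(S), where (ₓf)(s) = f(xs). Then S admits no left paradoxical decomposition. -/
open BoundedContinuousFunction

noncomputable def ind {S : Type*} [TopologicalSpace S] [DiscreteTopology S]
    (A : Set S) : S →ᵇ ℝ :=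
  BoundedContinuousFunction.ofNormedAddCommGroup (A.indicator 1)
    continuous_of_discreteTopology 1 (fun x => by
      by_cases hx : x ∈ A <;> simp [Set.indicator_apply, hx])

lemma ind_apply {S : Type*} [TopologicalSpace S] [DiscreteTopology S]
    (A : Set S) (s : S) : ind A s = A.indicator 1 s := rfl

lemma ind_nonneg {S : Type*} [TopologicalSpace S] [DiscreteTopology S]
    (A : Set S) : (0 : S →ᵇ ℝ) ≤ ind A := by
  intro s
  show (0:ℝ) ≤ A.indicator 1 s
  by_cases hs : s ∈ A <;> simp [Set.indicator_apply, hs]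

theorem stmt_12 {S : Type*} [Semigroup S] [TopologicalSpace S] [DiscreteTopology S]
    (M : (S →ᵇ ℝ) →ₗ[ℝ] ℝ)
    (hpos : ∀ f : S →ᵇ ℝ, 0 ≤ f → 0 ≤ M f) (hone : M 1 = 1)
    (hinv : ∀ (x : S) (f : S →ᵇ ℝ),
      M (f.compContinuous ⟨fun s => x * s, continuous_of_discreteTopology⟩) = M f) :
    ¬ ∃ (n m : ℕ) (A : Fin n → Set S) (B : Fin m → Set S)
        (g : Fin n → S) (h : Fin m → S),
        Pairwise (Function.onFun Disjoint (Sum.elim A B)) ∧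
        ((⋃ i, A i) ∪ ⋃ j, B j) = Set.univ ∧
        (⋃ i, {t : S | g i * t ∈ A i}) = Set.univ ∧
        (⋃ j, {t : S | h j * t ∈ B j}) = Set.univ := by
  rintro ⟨n, m, A, B, g, h, hdisj, hcover, hA, hB⟩
  -- monotonicity of M
  have hmono : ∀ f f' : S →ᵇ ℝ, f ≤ f' → M f ≤ M f' := by
    intro f f' hle
    have := hpos (f' - f) (sub_nonneg.mpr hle)
    rw [map_sub] at this
    linarith
  -- invariance in terms of ind
  have hindinv : ∀ (x : S) (C : Set S), M (ind {t : S | x * t ∈ C}) = M (ind C) := by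
    intro x C
    have heq : ind {t : S | x * t ∈ C} =
        (ind C).compContinuous ⟨fun s => x * s, continuous_of_discreteTopology⟩ := by
      ext s
      rw [compContinuous_apply, ind_apply, ind_apply]
      by_cases hs : x * s ∈ C <;>
        simp [Set.indicator_apply, hs]
    rw [heq, hinv]
  -- 1 ≤ sum of measures of a covering family of preimages
  have key : ∀ (k : ℕ) (C : Fin k → Set S) (u : Fin k → S),
      (⋃ i, {t : S | u i * t ∈ C i}) = Set.univ →
      1 ≤ ∑ i, M (ind (C i)) := by
    intro k C u hcov
    have hle : (1 : S →ᵇ ℝ) ≤ ∑ i, ind {t : S | u i * t ∈ C i} := by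
      intro s
      have hs : s ∈ ⋃ i, {t : S | u i * t ∈ C i} := hcov ▸ Set.mem_univ s
      obtain ⟨i, hi⟩ := Set.mem_iUnion.mp hs
      have h1 : ind {t : S | u i * t ∈ C i} s = 1 := by
        simp [ind_apply, Set.indicator_apply, hi]
      show (1 : S →ᵇ ℝ) s ≤ (∑ j, ind {t : S | u j * t ∈ C j}) s
      have hcoe : (∑ j, ind {t : S | u j * t ∈ C j}) s
          = ∑ j, ind {t : S | u j * t ∈ C j} s := by
        rw [coe_sum]; simp
      rw [hcoe]
      have : (1 : S →ᵇ ℝ) s = 1 := rfl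
      rw [this, ← h1]
      exact Finset.single_le_sum (f := fun j => ind {t : S | u j * t ∈ C j} s)
        (fun j _ => ind_nonneg _ s) (Finset.mem_univ i)
    have := hmono _ _ hle
    rw [hone, map_sum] at this
    calc (1:ℝ) ≤ ∑ i, M (ind {t : S | u i * t ∈ C i}) := this
      _ = ∑ i, M (ind (C i)) := Finset.sum_congr rfl (fun i _ => hindinv (u i) (C i))
  have hAge : 1 ≤ ∑ i, M (ind (A i)) := key n A g hA
  have hBge : 1 ≤ ∑ j, M (ind (B j)) := key m B h hB
  -- disjointness: sum of indicators ≤ 1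
  have hsumle : (∑ i, ind (A i)) + (∑ j, ind (B j)) ≤ (1 : S →ᵇ ℝ) := by
    intro s
    show ((∑ i, ind (A i)) + (∑ j, ind (B j))) s ≤ (1 : S →ᵇ ℝ) s
    have hval : ((∑ i, ind (A i)) + (∑ j, ind (B j))) s =
        ∑ k : Fin n ⊕ Fin m, ind (Sum.elim A B k) s := by
      rw [BoundedContinuousFunction.add_apply, coe_sum, coe_sum, Fintype.sum_sum_type]
      simp
    rw [hval]
    have h1 : (1 : S →ᵇ ℝ) s = 1 := rfl
    rw [h1]
    by_cases hex : ∃ k, s ∈ Sum.elim A B k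
    · obtain ⟨k0, hk0⟩ := hex
      have hs : ∑ k : Fin n ⊕ Fin m, ind (Sum.elim A B k) s = ind (Sum.elim A B k0) s := by
        apply Finset.sum_eq_single_of_mem k0 (Finset.mem_univ _)
        intro b _ hb
        have hd : Disjoint (Sum.elim A B k0) (Sum.elim A B b) := hdisj (Ne.symm hb)
        have : s ∉ Sum.elim A B b := Set.disjoint_left.mp hd hk0
        simp [ind_apply, Set.indicator_apply, this]
      rw [hs]
      simp [ind_apply, Set.indicator_apply, hk0]
    · push_neg at hex
      have hs : ∑ k : Fin n ⊕ Fin m, ind (Sum.elim A B k) s = 0 :=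
        Finset.sum_eq_zero (fun k _ => by simp [ind_apply, Set.indicator_apply, hex k])
      rw [hs]; norm_num
  have := hmono _ _ hsumle
  rw [hone, map_add, map_sum, map_sum] at this
  linarith
end

section
/- Let G be a group with tuple 𝔤 and partition ℰ, and let f : G → ℝ be nonnegative with countable support, summable, and total sum 1, where moreover f satisfies f(gⱼ⁻¹x) = f(x) for all x ∈ G and j = 1,…,n (left invariance along the generators). Then the numbers f_C = Σ_{x ∈ x₀(C)} f(x) satisfy the configuration equations: for every i ∈ {1,…,m} and j ∈ {1,…,n}, Σ_{C : Cⱼ = i} f_C = Σ_{C : C₀ = i} f_C. -/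
theorem stmt_15 {G : Type*} [Group G] {n m : ℕ} (g : Fin n → G) (E : Fin m → Set G)
    (hpart : ∀ x : G, ∃! i, x ∈ E i)
    (f : G → ℝ) (hf0 : ∀ x, 0 ≤ f x) (hcnt : (Function.support f).Countable)
    (hsum : Summable f) (htot : ∑' x, f x = 1)
    (hinv : ∀ (j : Fin n) (x : G), f ((g j)⁻¹ * x) = f x) :
    ∀ (i : Fin m) (j : Fin n),
      ∑ C ∈ Finset.univ.filter (fun C : Fin (n + 1) → Fin m => C j.succ = i),
          (∑' x : basePoints g E C, f x.1) =
        ∑ C ∈ Finset.univ.filter (fun C : Fin (n + 1) → Fin m => C 0 = i),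
          (∑' x : basePoints g E C, f x.1) := by
  classical
  intro i j
  set g' : Fin (n + 1) → G := Fin.cases 1 g with hg'
  have hbase : ∀ (C : Fin (n + 1) → Fin m) (x : G),
      x ∈ basePoints g E C ↔ ∀ k, g' k * x ∈ E (C k) := by
    intro C x
    constructor
    · rintro ⟨h0, hs⟩ k
      induction k using Fin.cases with
      | zero => simpa [g'] using h0
      | succ l => simpa [g'] using hs l
    · intro h
      exact ⟨by simpa [g'] using h 0, fun l => by simpa [g'] using h l.succ⟩
  have main : ∀ k : Fin (n + 1),
      ∑ C ∈ Finset.univ.filter (fun C : Fin (n + 1) → Fin m => C k = i),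
        (∑' x : basePoints g E C, f x.1)
      = ∑' x : G, Set.indicator {x : G | g' k * x ∈ E i} f x := by
    intro k
    simp only [tsum_subtype]
    rw [← Summable.tsum_finsetSum (fun C _ => hsum.indicator _)]
    refine tsum_congr fun x => ?_
    set Cx : Fin (n + 1) → Fin m := fun l => (hpart (g' l * x)).choose with hCx
    have hmem : x ∈ basePoints g E Cx :=
      (hbase Cx x).2 fun l => (hpart (g' l * x)).choose_spec.1
    by_cases hi : g' k * x ∈ E i
    · have hCk : Cx k = i := ((hpart (g' k * x)).choose_spec.2 i hi).symm
      rw [Finset.sum_eq_single Cx]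
      · rw [Set.indicator_of_mem hmem,
          Set.indicator_of_mem (show x ∈ {x : G | g' k * x ∈ E i} from hi) f]
      · intro C _ hne
        apply Set.indicator_of_notMem
        intro hxC
        exact hne (funext fun l =>
          (hpart (g' l * x)).choose_spec.2 (C l) ((hbase C x).1 hxC l))
      · intro h
        exact absurd (by simp [hCk] : Cx ∈ Finset.univ.filter (fun C : Fin (n+1) → Fin m => C k = i)) h
    · rw [Set.indicator_of_notMem (show x ∉ {x : G | g' k * x ∈ E i} from hi) f,
        Finset.sum_eq_zero]
      intro C hC
      apply Set.indicator_of_notMem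
      intro hxC
      have h1 := (hbase C x).1 hxC k
      rw [(Finset.mem_filter.1 hC).2] at h1
      exact hi h1
  rw [main j.succ, main 0]
  rw [← Equiv.tsum_eq (Equiv.mulLeft (g j)⁻¹)
      (Set.indicator {x : G | g' j.succ * x ∈ E i} f)]
  refine tsum_congr fun y => ?_
  have hgy : g' j.succ * (Equiv.mulLeft (g j)⁻¹ y) = y := by
    simp [g']
  have hfy : f (Equiv.mulLeft (g j)⁻¹ y) = f y := by
    simpa using hinv j y
  simp only [Set.indicator_apply, Set.mem_setOf_eq, hgy, hfy, g', Fin.cases_zero, one_mul]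
end
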